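/- arXiv:2009.14266 — 4 statements merged into one kernel-verified Lean document; each statement's English description precedes it below -/
import Mathlib

section
/- Let X be a nonempty, noncompact, proper metric space (closed bounded subsets are compact) in which every pair of points is joined by a minimizing geodesic: for all x, y ∈ X there exists γ : ℝ → X with γ 0 = x, γ (dist x y) = y, and dist (γ s) (γ t) = |s − t| for all s, t ∈ [0, dist x y]. Then for every point x ∈ X there exists a distance-minimizing geodesic ray based at x, i.e., a map α : ℝ → X with α 0 = x and dist (α s) (α t) = |s − t| for all s, t ∈ [0, ∞). -/
/-- In a nonempty, noncompact, proper metric space in which every pair of points is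
joined by a minimizing geodesic, every point is the base point of a
distance-minimizing geodesic ray. -/
theorem exists_distMinRay {X : Type*} [MetricSpace X] [Nonempty X] [ProperSpace X]
    (hnc : ¬ CompactSpace X)
    (hgeo : ∀ x y : X, ∃ γ : ℝ → X, γ 0 = x ∧ γ (dist x y) = y ∧
      ∀ s ∈ Set.Icc (0 : ℝ) (dist x y), ∀ t ∈ Set.Icc (0 : ℝ) (dist x y),
        dist (γ s) (γ t) = |s - t|) :
    ∀ x : X, ∃ α : ℝ → X, α 0 = x ∧
      ∀ s ∈ Set.Ici (0 : ℝ), ∀ t ∈ Set.Ici (0 : ℝ), dist (α s) (α t) = |s - t| := by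
  intro x
  -- X is unbounded
  have hub : ∀ r : ℝ, ∃ y : X, r ≤ dist x y := by
    intro r
    by_contra h
    push_neg at h
    apply hnc
    refine ⟨IsCompact.of_isClosed_subset (isCompact_closedBall x r) isClosed_univ ?_⟩
    intro y _
    exact Metric.mem_closedBall.2 (by rw [dist_comm]; exact (h y).le)
  choose y hy using fun n : ℕ => hub n
  choose γ hγ0 hγ1 hγiso using fun n : ℕ => hgeo x (y n)
  set d : ℕ → ℝ := fun n => dist x (y n) with hd
  have hd0 : ∀ n, 0 ≤ d n := fun n => dist_nonneg
  -- clamped geodesics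
  set f : ℕ → ℝ → X := fun n t => γ n (max 0 (min t (d n))) with hfdef
  have hclamp : ∀ n t, max 0 (min t (d n)) ∈ Set.Icc (0 : ℝ) (d n) := by
    intro n t
    constructor
    · exact le_max_left _ _
    · exact max_le (hd0 n) (min_le_right _ _)
  have hf0 : ∀ n, f n 0 = x := by
    intro n
    have : max 0 (min (0:ℝ) (d n)) = 0 := by
      rw [min_eq_left (hd0 n)]; simp
    simp only [hfdef, this, hγ0]
  have hmem : ∀ n t, f n t ∈ Metric.closedBall x (max 0 t) := by
    intro n t
    have h0 : (0:ℝ) ∈ Set.Icc (0:ℝ) (d n) := ⟨le_rfl, hd0 n⟩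
    rw [Metric.mem_closedBall]
    show dist (γ n (max 0 (min t (d n)))) x ≤ max 0 t
    rw [← hγ0 n, hγiso n _ (hclamp n t) 0 ⟨le_rfl, hd0 n⟩, sub_zero,
      abs_of_nonneg (le_max_left _ _)]
    exact max_le_max le_rfl (min_le_left _ _)
  have hdist : ∀ (n : ℕ) (s t : ℝ), 0 ≤ s → 0 ≤ t → s ≤ n → t ≤ n →
      dist (f n s) (f n t) = |s - t| := by
    intro n s t hs ht hsn htn
    have hsd : s ≤ d n := hsn.trans (hy n)
    have htd : t ≤ d n := htn.trans (hy n)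
    have hcs : max 0 (min s (d n)) = s := by rw [min_eq_left hsd, max_eq_right hs]
    have hct : max 0 (min t (d n)) = t := by rw [min_eq_left htd, max_eq_right ht]
    have := hγiso n s ⟨hs, hsd⟩ t ⟨ht, htd⟩
    simp only [hfdef, hcs, hct]
    exact this
  -- ultrafilter limit
  set F : Ultrafilter ℕ := Ultrafilter.of Filter.atTop with hF
  have hFle : (F : Filter ℕ) ≤ Filter.atTop := Ultrafilter.of_le _
  have key : ∀ t : ℝ, ∃ a : X, Filter.Tendsto (fun n => f n t) (F : Filter ℕ) (nhds a) := by
    intro t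
    have hK : IsCompact (Metric.closedBall x (max 0 t)) := isCompact_closedBall x _
    have hle : (F.map (fun n => f n t) : Filter X) ≤
        Filter.principal (Metric.closedBall x (max 0 t)) := by
      rw [Filter.le_principal_iff]
      exact Filter.mem_map.2 (Filter.univ_mem' (fun n => hmem n t))
    obtain ⟨a, _, ha⟩ := hK.ultrafilter_le_nhds (F.map (fun n => f n t)) hle
    exact ⟨a, ha⟩
  choose α hα using key
  refine ⟨α, ?_, ?_⟩
  · have h1 := hα 0
    simp only [hf0] at h1
    exact tendsto_nhds_unique h1 tendsto_const_nhds
  · intro s hs t ht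
    have h1 : Filter.Tendsto (fun n => dist (f n s) (f n t)) (F : Filter ℕ)
        (nhds (dist (α s) (α t))) := (hα s).dist (hα t)
    have h2' : ∀ᶠ n in Filter.atTop, dist (f n s) (f n t) = |s - t| := by
      rw [Filter.eventually_atTop]
      refine ⟨⌈max s t⌉₊, fun n hn => ?_⟩
      have hmax : max s t ≤ (n : ℝ) := (Nat.le_ceil _).trans (Nat.cast_le.2 hn)
      exact hdist n s t hs ht ((le_max_left s t).trans hmax) ((le_max_right s t).trans hmax)
    have h2 : ∀ᶠ n in (F : Filter ℕ), dist (f n s) (f n t) = |s - t| :=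
      h2'.filter_mono hFle
    have h3 : Filter.Tendsto (fun n => dist (f n s) (f n t)) (F : Filter ℕ)
        (nhds (|s - t|)) := by
      exact Filter.Tendsto.congr' (h2.mono fun n h => h.symm) tendsto_const_nhds
    exact tendsto_nhds_unique h1 h3
end

section
/- Let X be a proper metric space, C ⊆ X a nonempty compact set, and let (a_n) and (b_n) be real sequences with a_n → −∞ and b_n → +∞. Suppose for each n there is a map γ_n : ℝ → X with γ_n 0 ∈ C and dist (γ_n s) (γ_n t) = |s − t| for all s, t ∈ [a_n, b_n]. Then there exists a distance-minimizing geodesic in X, i.e., a map α : ℝ → X with dist (α s) (α t) = |s − t| for all s, t ∈ ℝ. -/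
/-- In a proper metric space, if there are distance-minimizing segments defined on
intervals [a_n, b_n] with a_n → -∞ and b_n → ∞, each passing through a fixed nonempty
compact set at time 0, then the space contains a distance-minimizing geodesic line. -/
theorem exists_distMinGeodesic_of_segments {X : Type*} [MetricSpace X] [ProperSpace X]
    (C : Set X) (hCne : C.Nonempty) (hCc : IsCompact C)
    (a b : ℕ → ℝ)
    (ha : Filter.Tendsto a Filter.atTop Filter.atBot)
    (hb : Filter.Tendsto b Filter.atTop Filter.atTop)
    (γ : ℕ → ℝ → X)
    (hγC : ∀ n, γ n 0 ∈ C)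
    (hγ : ∀ n, ∀ s ∈ Set.Icc (a n) (b n), ∀ t ∈ Set.Icc (a n) (b n),
      dist (γ n s) (γ n t) = |s - t|) :
    ∃ α : ℝ → X, ∀ s t : ℝ, dist (α s) (α t) = |s - t| := by
  classical
  let U : Ultrafilter ℕ := Ultrafilter.of Filter.atTop
  have hU : (U : Filter ℕ) ≤ Filter.atTop := Ultrafilter.of_le _
  -- eventually both s and 0 lie in [a n, b n]
  have hev : ∀ t : ℝ, ∀ᶠ n in Filter.atTop,
      t ∈ Set.Icc (a n) (b n) ∧ (0:ℝ) ∈ Set.Icc (a n) (b n) := by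
    intro t
    have h1 : ∀ᶠ n in Filter.atTop, a n ≤ min t 0 := ha.eventually_le_atBot _
    have h2 : ∀ᶠ n in Filter.atTop, max t 0 ≤ b n := hb.eventually_ge_atTop _
    filter_upwards [h1, h2] with n h1 h2
    exact ⟨⟨h1.trans (min_le_left _ _), (le_max_left _ _).trans h2⟩,
      ⟨h1.trans (min_le_right _ _), (le_max_right _ _).trans h2⟩⟩
  have key : ∀ t : ℝ, ∃ x : X, Filter.Tendsto (fun n => γ n t) U (nhds x) := by
    intro t
    have hK : IsCompact (Metric.cthickening |t| C) := hCc.cthickening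
    have hmem : ∀ᶠ n in (U : Filter ℕ), γ n t ∈ Metric.cthickening |t| C := by
      apply Filter.Eventually.filter_mono hU
      filter_upwards [hev t] with n hn
      have hd : dist (γ n t) (γ n 0) = |t| := by
        simpa using hγ n t hn.1 0 hn.2
      exact Metric.mem_cthickening_of_dist_le _ _ _ _ (hγC n) hd.le
    obtain ⟨x, _, hx⟩ := hK.ultrafilter_le_nhds (U.map (fun n => γ n t))
      (by rwa [Ultrafilter.coe_map, Filter.le_principal_iff, Filter.mem_map])
    exact ⟨x, hx⟩
  choose α hα using key
  refine ⟨α, fun s t => ?_⟩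
  have hd : Filter.Tendsto (fun n => dist (γ n s) (γ n t)) U
      (nhds (dist (α s) (α t))) := (hα s).dist (hα t)
  have hc : Filter.Tendsto (fun n => dist (γ n s) (γ n t)) U (nhds |s - t|) := by
    apply Filter.Tendsto.congr' _ tendsto_const_nhds
    apply Filter.Eventually.filter_mono hU
    filter_upwards [hev s, hev t] with n hs ht
    exact (hγ n s hs.1 t ht.1).symm
  exact tendsto_nhds_unique hd hc
end

section
/- Let X be a proper metric space in which every pair of points is joined by a minimizing geodesic: for all x, y ∈ X there exists γ : ℝ → X with γ 0 = x, γ (dist x y) = y, and dist (γ s) (γ t) = |s − t| for all s, t ∈ [0, dist x y]. Let C ⊆ X be a nonempty compact set and let (x_n) and (y_n) be sequences in X with infDist x_n C → ∞ and infDist y_n C → ∞, such that for every n there exists z_n ∈ C with dist x_n z_n + dist z_n y_n = dist x_n y_n. Then X contains a distance-minimizing geodesic: there exists α : ℝ → X with dist (α s) (α t) = |s − t| for all s, t ∈ ℝ. -/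
/-!
Glue, at the point `z n ∈ C`, a minimizing geodesic from `z n` to `x n` (run backwards) to one
from `z n` to `y n`; the equality `dist x z + dist z y = dist x y` makes the glued curve
minimizing on `[-dist z x, dist z y]`, an interval that eventually contains any given time.
Since `C` is compact and the space proper, the value at time `t` stays in the compact set
`cthickening |t| C`, so the curves converge pointwise along an ultrafilter, and the limit is
an isometric line.
-/

open Set Filter Metric Topology

section Limit

variable {ι T X : Type*} [PseudoMetricSpace T] [PseudoMetricSpace X] [ProperSpace X]

theorem exists_isometry_of_eventually_dist_eq {l : Filter ι} [l.NeBot] {C : Set X}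
    (hC : IsCompact C) {β : ι → T → X} (t₀ : T) (h₀ : ∀ᶠ n in l, β n t₀ ∈ C)
    (hβ : ∀ s t, ∀ᶠ n in l, dist (β n s) (β n t) = dist s t) :
    ∃ α : T → X, Isometry α := by
  let U := Ultrafilter.of l
  have hU : (U : Filter ι) ≤ l := Ultrafilter.of_le l
  have hlim : ∀ t, ∃ p, Tendsto (fun n => β n t) U (𝓝 p) := by
    intro t
    have hmem : ∀ᶠ n in l, β n t ∈ cthickening (dist t t₀) C := by
      filter_upwards [h₀, hβ t t₀] with n hn hd
      exact mem_cthickening_of_dist_le _ _ _ _ hn hd.le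
    obtain ⟨p, -, hp⟩ := hC.cthickening.ultrafilter_le_nhds (U.map fun n => β n t)
      (le_principal_iff.2 (hU hmem))
    exact ⟨p, hp⟩
  choose α hα using hlim
  refine ⟨α, Isometry.of_dist_eq fun s t => ?_⟩
  refine tendsto_nhds_unique ((hα s).dist (hα t)) (tendsto_const_nhds.congr' ?_)
  exact ((hβ s t).filter_mono hU).mono fun n h => h.symm

end Limit

section Concat

variable {X : Type*}

noncomputable def concatAtZero (σ τ : ℝ → X) (t : ℝ) : X :=
  if t ≤ 0 then σ (-t) else τ t

theorem concatAtZero_zero (σ τ : ℝ → X) : concatAtZero σ τ 0 = σ 0 :=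
  by simp [concatAtZero]

variable [PseudoMetricSpace X] {σ τ : ℝ → X} {a b : ℝ}

theorem dist_eq_add_of_dist_eq_add
    (hσ : ∀ s ∈ Icc 0 a, ∀ t ∈ Icc 0 a, dist (σ s) (σ t) = |s - t|)
    (hτ : ∀ s ∈ Icc 0 b, ∀ t ∈ Icc 0 b, dist (τ s) (τ t) = |s - t|)
    (hστ : σ 0 = τ 0) (hab : dist (σ a) (τ b) = a + b)
    {u v : ℝ} (hu : u ∈ Icc 0 a) (hv : v ∈ Icc 0 b) :
    dist (σ u) (τ v) = u + v := by
  have h0a : (0 : ℝ) ∈ Icc 0 a := ⟨le_rfl, hu.1.trans hu.2⟩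
  have h0b : (0 : ℝ) ∈ Icc 0 b := ⟨le_rfl, hv.1.trans hv.2⟩
  have hσu : dist (σ u) (σ 0) = u := by rw [hσ u hu 0 h0a, sub_zero, abs_of_nonneg hu.1]
  have hτv : dist (τ 0) (τ v) = v := by rw [hτ 0 h0b v hv, zero_sub, abs_neg, abs_of_nonneg hv.1]
  have hσa : dist (σ a) (σ u) = a - u := by
    rw [hσ a ⟨h0a.2, le_rfl⟩ u hu, abs_of_nonneg (sub_nonneg.2 hu.2)]
  have hτb : dist (τ v) (τ b) = b - v := by
    rw [hτ v hv b ⟨h0b.2, le_rfl⟩, abs_sub_comm, abs_of_nonneg (sub_nonneg.2 hv.2)]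
  have hupper := dist_triangle (σ u) (σ 0) (τ v)
  rw [hσu, hστ, hτv] at hupper
  -- the triangle inequality along `σ a, σ u, τ v, τ b` is an equality
  have hlower := dist_triangle4 (σ a) (σ u) (τ v) (τ b)
  rw [hab, hσa, hτb] at hlower
  linarith

theorem dist_concatAtZero
    (hσ : ∀ s ∈ Icc 0 a, ∀ t ∈ Icc 0 a, dist (σ s) (σ t) = |s - t|)
    (hτ : ∀ s ∈ Icc 0 b, ∀ t ∈ Icc 0 b, dist (τ s) (τ t) = |s - t|)
    (hστ : σ 0 = τ 0) (hab : dist (σ a) (τ b) = a + b) :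
    ∀ s ∈ Icc (-a) b, ∀ t ∈ Icc (-a) b,
      dist (concatAtZero σ τ s) (concatAtZero σ τ t) = |s - t| := by
  intro s hs t ht
  have mixed : ∀ {u v}, u ∈ Icc 0 a → v ∈ Icc 0 b → dist (σ u) (τ v) = u + v :=
    dist_eq_add_of_dist_eq_add hσ hτ hστ hab
  unfold concatAtZero
  rcases le_or_gt s 0 with hs0 | hs0 <;> rcases le_or_gt t 0 with ht0 | ht0
  · rw [if_pos hs0, if_pos ht0, hσ _ ⟨by linarith, by linarith [hs.1]⟩ _
      ⟨by linarith, by linarith [ht.1]⟩, abs_sub_comm, neg_sub_neg]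
  · rw [if_pos hs0, if_neg ht0.not_ge, mixed ⟨by linarith, by linarith [hs.1]⟩ ⟨ht0.le, ht.2⟩,
      abs_of_neg (by linarith)]
    ring
  · rw [if_neg hs0.not_ge, if_pos ht0, dist_comm,
      mixed ⟨by linarith, by linarith [ht.1]⟩ ⟨hs0.le, hs.2⟩, abs_of_pos (by linarith)]
    ring
  · rw [if_neg hs0.not_ge, if_neg ht0.not_ge, hτ s ⟨hs0.le, hs.2⟩ t ⟨ht0.le, ht.2⟩]

end Concat

theorem exists_distMinGeodesic_of_spanning_sequences_general {X : Type*} [MetricSpace X]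
    [ProperSpace X]
    (hgeo : ∀ x y : X, ∃ γ : ℝ → X, γ 0 = x ∧ γ (dist x y) = y ∧
      ∀ s ∈ Set.Icc (0 : ℝ) (dist x y), ∀ t ∈ Set.Icc (0 : ℝ) (dist x y),
        dist (γ s) (γ t) = |s - t|)
    (C : Set X) (hCc : IsCompact C)
    (x y : ℕ → X)
    (hx : Filter.Tendsto (fun n => Metric.infDist (x n) C) Filter.atTop Filter.atTop)
    (hy : Filter.Tendsto (fun n => Metric.infDist (y n) C) Filter.atTop Filter.atTop)
    (hz : ∀ n, ∃ z ∈ C, dist (x n) z + dist z (y n) = dist (x n) (y n)) :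
    ∃ α : ℝ → X, ∀ s t : ℝ, dist (α s) (α t) = |s - t| := by
  choose z hzC hxzy using hz
  choose σ hσ0 hσx hσ using fun n => hgeo (z n) (x n)
  choose τ hτ0 hτy hτ using fun n => hgeo (z n) (y n)
  have hβ n := dist_concatAtZero (hσ n) (hτ n) ((hσ0 n).trans (hτ0 n).symm)
    (by rw [hσx, hτy, ← hxzy, dist_comm (x n)])
  have ha : Tendsto (fun n => dist (z n) (x n)) atTop atTop :=
    tendsto_atTop_mono (fun n => (infDist_le_dist_of_mem (hzC n)).trans_eq (dist_comm _ _)) hx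
  have hb : Tendsto (fun n => dist (z n) (y n)) atTop atTop :=
    tendsto_atTop_mono (fun n => (infDist_le_dist_of_mem (hzC n)).trans_eq (dist_comm _ _)) hy
  have hIcc (s : ℝ) : ∀ᶠ n in atTop, s ∈ Icc (-dist (z n) (x n)) (dist (z n) (y n)) := by
    filter_upwards [ha.eventually_ge_atTop (-s), hb.eventually_ge_atTop s] with n hna hnb
    exact ⟨neg_le.1 hna, hnb⟩
  have hβ₀ : ∀ᶠ n in atTop, concatAtZero (σ n) (τ n) 0 ∈ C :=
    Eventually.of_forall fun n => (concatAtZero_zero (σ n) (τ n)).trans (hσ0 n) ▸ hzC n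
  have hβdist (s t : ℝ) : ∀ᶠ n in atTop,
      dist (concatAtZero (σ n) (τ n) s) (concatAtZero (σ n) (τ n) t) = dist s t := by
    filter_upwards [hIcc s, hIcc t] with n hs ht
    rw [hβ n s hs t ht, Real.dist_eq]
  obtain ⟨α, hα⟩ := exists_isometry_of_eventually_dist_eq hCc 0 hβ₀ hβdist
  exact ⟨α, fun s t => by rw [hα.dist_eq, Real.dist_eq]⟩

/-- In a proper geodesic metric space, if there are sequences (x_n), (y_n) going to
infinity away from a fixed nonempty compact set C such that some minimizing geodesic
from x_n to y_n passes through C, then the space contains a distance-minimizing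
geodesic line. -/
theorem exists_distMinGeodesic_of_spanning_sequences {X : Type*} [MetricSpace X]
    [ProperSpace X]
    (hgeo : ∀ x y : X, ∃ γ : ℝ → X, γ 0 = x ∧ γ (dist x y) = y ∧
      ∀ s ∈ Set.Icc (0 : ℝ) (dist x y), ∀ t ∈ Set.Icc (0 : ℝ) (dist x y),
        dist (γ s) (γ t) = |s - t|)
    (C : Set X) (hCne : C.Nonempty) (hCc : IsCompact C)
    (x y : ℕ → X)
    (hx : Filter.Tendsto (fun n => Metric.infDist (x n) C) Filter.atTop Filter.atTop)
    (hy : Filter.Tendsto (fun n => Metric.infDist (y n) C) Filter.atTop Filter.atTop)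
    (hz : ∀ n, ∃ z ∈ C, dist (x n) z + dist z (y n) = dist (x n) (y n)) :
    ∃ α : ℝ → X, ∀ s t : ℝ, dist (α s) (α t) = |s - t| :=
  exists_distMinGeodesic_of_spanning_sequences_general hgeo C hCc x y hx hy hz
end

section
/- Let X be a metric space, m ≥ 1 a natural number, and C_0, C_1, …, C_m nonempty subsets of X. Suppose that for each k with 0 < k < m there exist disjoint open sets U_k and V_k with X \ C_k = U_k ∪ V_k, with C_j ⊆ U_k for all j < k and C_j ⊆ V_k for all j > k. Then for every continuous map γ : ℝ → X with γ 0 ∈ C_0 and γ 1 ∈ C_m, the total variation of γ on the interval [0,1] is at least Σ_{k=0}^{m−1} d(C_k, C_{k+1}), where d(A,B) = inf { dist a b : a ∈ A, b ∈ B }. -/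
/-!
Since `C k` separates `C (k - 1)` from `C m`, a path that has reached `C (k - 1)` at time `t` must
meet `C k` at some later time `s ≤ 1`, because `γ '' [t, 1]` is connected. Repeating this gives
times `0 = t₀ ≤ t₁ ≤ ⋯ ≤ tₘ = 1` with `γ tₖ ∈ C k`; the variation on `[tₖ, tₖ₊₁]` is at least
`dist (γ tₖ) (γ tₖ₊₁) ≥ setDist (C k) (C (k + 1))`, and variation is additive over adjacent intervals.
-/

noncomputable def setDist {X : Type*} [MetricSpace X] (A B : Set X) : ℝ :=
  sInf {d : ℝ | ∃ a ∈ A, ∃ b ∈ B, d = dist a b}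

open Set Finset

lemma setDist_le_dist {X : Type*} [MetricSpace X] {A B : Set X} {a b : X} (ha : a ∈ A)
    (hb : b ∈ B) : setDist A B ≤ dist a b :=
  csInf_le ⟨0, by rintro d ⟨x, -, y, -, rfl⟩; exact dist_nonneg⟩ ⟨a, ha, b, hb, rfl⟩

lemma ofReal_setDist_le_eVariationOn {α X : Type*} [LinearOrder α] [MetricSpace X]
    {f : α → X} {s : Set α} {A B : Set X} {a b : α} (ha : a ∈ s) (hb : b ∈ s)
    (hfa : f a ∈ A) (hfb : f b ∈ B) : ENNReal.ofReal (setDist A B) ≤ eVariationOn f s :=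
  calc ENNReal.ofReal (setDist A B) ≤ edist (f a) (f b) := by
        rw [edist_dist]; exact ENNReal.ofReal_le_ofReal (setDist_le_dist hfa hfb)
    _ ≤ eVariationOn f s := eVariationOn.edist_le f ha hb

lemma eVariationOn_Icc_add_Icc {α E : Type*} [LinearOrder α] [PseudoEMetricSpace E] (f : α → E)
    {a b c : α} (hab : a ≤ b) (hbc : b ≤ c) :
    eVariationOn f (Icc a b) + eVariationOn f (Icc b c) = eVariationOn f (Icc a c) := by
  rw [← eVariationOn.union f (isGreatest_Icc hab) (isLeast_Icc hbc), Icc_union_Icc_eq_Icc hab hbc]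

lemma IsPreconnected.inter_nonempty_of_compl_eq_union {X : Type*} [TopologicalSpace X]
    {s C U V : Set X} (hs : IsPreconnected s) (hU : IsOpen U) (hV : IsOpen V)
    (hUV : Disjoint U V) (hC : Cᶜ = U ∪ V) (hsU : (s ∩ U).Nonempty) (hsV : (s ∩ V).Nonempty) :
    (s ∩ C).Nonempty := by
  by_contra hsC
  have hsub : s ⊆ U ∪ V := fun x hx ↦ hC ▸ fun hxC ↦ hsC ⟨x, hx, hxC⟩
  obtain ⟨x, -, hxU, hxV⟩ := hs U V hU hV hsub hsU hsV
  exact hUV.ne_of_mem hxU hxV rfl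

def SeparatesInOrder {X : Type*} [TopologicalSpace X] (C : ℕ → Set X) (m : ℕ) : Prop :=
  ∀ k, 0 < k → k < m → ∃ U V : Set X, IsOpen U ∧ IsOpen V ∧
    Disjoint U V ∧ (C k)ᶜ = U ∪ V ∧
    (∀ j, j < k → C j ⊆ U) ∧ (∀ j, k < j → j ≤ m → C j ⊆ V)

section Path

variable {X : Type*} [MetricSpace X] {m : ℕ} {C : ℕ → Set X} {γ : ℝ → X}

lemma SeparatesInOrder.exists_mem_Icc_mem_succ (hsep : SeparatesInOrder C m)
    (hγ : Continuous γ) (h1 : γ 1 ∈ C m) {k : ℕ} (hk : k < m) {t : ℝ} (ht : t ≤ 1)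
    (hγt : γ t ∈ C k) : ∃ s ∈ Icc t 1, γ s ∈ C (k + 1) := by
  rcases (Nat.succ_le_of_lt hk).eq_or_lt with rfl | hkm
  · exact ⟨1, right_mem_Icc.2 ht, h1⟩
  obtain ⟨U, V, hU, hV, hUV, hCUV, hCU, hCV⟩ := hsep (k + 1) k.succ_pos hkm
  have hconn : IsPreconnected (γ '' Icc t 1) := isPreconnected_Icc.image γ hγ.continuousOn
  obtain ⟨_, ⟨s, hs, rfl⟩, hγs⟩ := hconn.inter_nonempty_of_compl_eq_union hU hV hUV hCUV
    ⟨γ t, mem_image_of_mem γ (left_mem_Icc.2 ht), hCU k k.lt_succ_self hγt⟩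
    ⟨γ 1, mem_image_of_mem γ (right_mem_Icc.2 ht), hCV m hkm le_rfl h1⟩
  exact ⟨s, hs, hγs⟩

lemma SeparatesInOrder.exists_ofReal_sum_setDist_le_eVariationOn (hsep : SeparatesInOrder C m)
    (hγ : Continuous γ) (h0 : γ 0 ∈ C 0) (h1 : γ 1 ∈ C m) {k : ℕ} (hk : k ≤ m) :
    ∃ t ∈ Icc (0 : ℝ) 1, γ t ∈ C k ∧
      ENNReal.ofReal (∑ i ∈ range k, setDist (C i) (C (i + 1))) ≤ eVariationOn γ (Icc 0 t) := by
  induction k with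
  | zero => exact ⟨0, left_mem_Icc.2 zero_le_one, h0, by simp⟩
  | succ k ih =>
    obtain ⟨t, ⟨ht0, ht1⟩, hγt, hvar⟩ := ih (Nat.le_of_succ_le hk)
    obtain ⟨s, ⟨hts, hs1⟩, hγs⟩ := hsep.exists_mem_Icc_mem_succ hγ h1 hk ht1 hγt
    refine ⟨s, ⟨ht0.trans hts, hs1⟩, hγs, ?_⟩
    calc ENNReal.ofReal (∑ i ∈ range (k + 1), setDist (C i) (C (i + 1)))
        ≤ ENNReal.ofReal (∑ i ∈ range k, setDist (C i) (C (i + 1)))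
          + ENNReal.ofReal (setDist (C k) (C (k + 1))) := by
          rw [sum_range_succ]; exact ENNReal.ofReal_add_le
      _ ≤ eVariationOn γ (Icc 0 t) + eVariationOn γ (Icc t s) :=
          add_le_add hvar (ofReal_setDist_le_eVariationOn (left_mem_Icc.2 hts)
            (right_mem_Icc.2 hts) hγt hγs)
      _ = eVariationOn γ (Icc 0 s) := eVariationOn_Icc_add_Icc γ ht0 hts

end Path

theorem totalVariation_ge_sum_setDist_general {X : Type*} [MetricSpace X] (m : ℕ)
    (C : ℕ → Set X)
    (hsep : ∀ k, 0 < k → k < m → ∃ U V : Set X, IsOpen U ∧ IsOpen V ∧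
      Disjoint U V ∧ (C k)ᶜ = U ∪ V ∧
      (∀ j, j < k → C j ⊆ U) ∧ (∀ j, k < j → j ≤ m → C j ⊆ V))
    (γ : ℝ → X) (hγ : Continuous γ) (h0 : γ 0 ∈ C 0) (h1 : γ 1 ∈ C m) :
    ENNReal.ofReal (∑ k ∈ Finset.range m, setDist (C k) (C (k + 1))) ≤
      eVariationOn γ (Set.Icc 0 1) := by
  obtain ⟨t, ⟨-, ht1⟩, -, hvar⟩ :=
    SeparatesInOrder.exists_ofReal_sum_setDist_le_eVariationOn hsep hγ h0 h1 le_rfl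
  exact hvar.trans (eVariationOn.mono γ (Icc_subset_Icc_right ht1))

/-- If each intermediate set C_k separates the earlier sets from the later ones, then
any continuous path from C_0 to C_m has total variation on [0,1] at least the sum of
the distances between consecutive sets. -/
theorem totalVariation_ge_sum_setDist {X : Type*} [MetricSpace X] (m : ℕ) (hm : 1 ≤ m)
    (C : ℕ → Set X) (hCne : ∀ k ≤ m, (C k).Nonempty)
    (hsep : ∀ k, 0 < k → k < m → ∃ U V : Set X, IsOpen U ∧ IsOpen V ∧
      Disjoint U V ∧ (C k)ᶜ = U ∪ V ∧
      (∀ j, j < k → C j ⊆ U) ∧ (∀ j, k < j → j ≤ m → C j ⊆ V))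
    (γ : ℝ → X) (hγ : Continuous γ) (h0 : γ 0 ∈ C 0) (h1 : γ 1 ∈ C m) :
    ENNReal.ofReal (∑ k ∈ Finset.range m, setDist (C k) (C (k + 1))) ≤
      eVariationOn γ (Set.Icc 0 1) :=
  totalVariation_ge_sum_setDist_general m C hsep γ hγ h0 h1
end
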